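/- Let λ be a partition, let c be the coatom of row i of P_λ, and let x ∈ P_λ. Then x ≤ c in P_λ if and only if, when the sets {x_1, …, x_i} and {c_1, …, c_i} are each listed in increasing order, the list for x is componentwise ≤ the list for c (i.e. it suffices to check the defining dominance condition only at index j = i). -/

import Mathlib

namespace RookPoset

/-- A partition with `n` parts: `part i` is the (1-based) part `λ_{i+1}`.
The parts are weakly increasing and contain the staircase (`λ_i ≥ i`, 1-based),
which in particular makes them positive. -/
structure Partition (n : ℕ) where
  part : Fin n → ℕ
  mono : Monotone part
  staircase : ∀ i : Fin n, (i : ℕ) + 1 ≤ part i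

/-- The largest part; equals `λ_n` when `n > 0`. -/
def Partition.maxPart {n : ℕ} (lam : Partition n) : ℕ :=
  Finset.univ.sup lam.part

/-- The part `λ_k` in 1-based indexing, with the convention `λ_m = n + 1` for `m > n`. -/
def Partition.partAt {n : ℕ} (lam : Partition n) (k : ℕ) : ℕ :=
  if h : 1 ≤ k ∧ k ≤ n then lam.part ⟨k - 1, by omega⟩ else n + 1

/-- The GJW sequence `(λ_1 - 1, λ_2 - 2, …, λ_n - n)` of a partition. -/
def Partition.gjw {n : ℕ} (lam : Partition n) : List ℕ :=
  (List.finRange n).map fun i => lam.part i - ((i : ℕ) + 1)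

/-- A maximal rook placement on the Ferrers board of `lam`: `col i` is the (1-based)
column of the rook in the (1-based) row `i + 1` (rows indexed bottom-up). -/
structure Placement {n : ℕ} (lam : Partition n) where
  col : Fin n → ℕ
  inj : Function.Injective col
  pos : ∀ i, 1 ≤ col i
  le_part : ∀ i, col i ≤ lam.part i

/-- The increasingly sorted list of the values `x i` over indices `i` with `(i : ℕ) < j`,
i.e. the sorted initial segment `{x_1, …, x_j}` (1-based). -/
def initSeg {n : ℕ} (x : Fin n → ℕ) (j : ℕ) : List ℕ :=
  ((Finset.univ.filter fun i : Fin n => (i : ℕ) < j).image x).sort (· ≤ ·)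

/-- The rook poset order: `x ≤ y` iff each sorted initial segment of `x` is
componentwise at most the corresponding sorted initial segment of `y`. -/
def rle {n : ℕ} {lam : Partition n} (x y : Placement lam) : Prop :=
  ∀ j : ℕ, List.Forall₂ (· ≤ ·) (initSeg x.col j) (initSeg y.col j)

/-- `y` covers `x` in the rook poset. -/
def rcovers {n : ℕ} {lam : Partition n} (x y : Placement lam) : Prop :=
  rle x y ∧ x ≠ y ∧ ∀ z : Placement lam, rle x z → rle z y → z = x ∨ z = y

/-- `y` covers `x` in the subposet induced on `S`. -/
def rcoversIn {n : ℕ} {lam : Partition n} (S : Set (Placement lam)) (x y : Placement lam) :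
    Prop :=
  x ∈ S ∧ y ∈ S ∧ rle x y ∧ x ≠ y ∧ ∀ z ∈ S, rle x z → rle z y → z = x ∨ z = y

/-- `t` is the greedy placement `1̂`: for each row in turn (bottom-up), the rook is placed
in the largest column `≤ λ_i` not used by a lower row. -/
def IsGreedy {n : ℕ} {lam : Partition n} (t : Placement lam) : Prop :=
  ∀ i : Fin n, ∀ m : ℕ, 1 ≤ m → m ≤ lam.part i →
    (∀ k : Fin n, k < i → t.col k ≠ m) → m ≤ t.col i

/-- `x` is obtained from `y` by the switch move on the rooks in rows `i < k`:
the rectangle spanned by the rooks at `(i, y.col i)` and `(k, y.col k)` contains no other rook,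
and the two rooks exchange columns. -/
def SwitchMove {n : ℕ} {lam : Partition n} (y x : Placement lam) (i k : Fin n) : Prop :=
  i < k ∧ y.col k < y.col i ∧
  (∀ r : Fin n, i ≤ r → r ≤ k → y.col k ≤ y.col r → y.col r ≤ y.col i → r = i ∨ r = k) ∧
  x.col i = y.col k ∧ x.col k = y.col i ∧
  ∀ r : Fin n, r ≠ i → r ≠ k → x.col r = y.col r

/-- `x` is obtained from `y` by a push move on the rook in row `i`: the rook moves to an
empty column `c` to its left such that every column strictly between `c` and its old column
contains a rook in a row below row `i`. -/
def PushMove {n : ℕ} {lam : Partition n} (y x : Placement lam) (i : Fin n) : Prop :=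
  ∃ c : ℕ, 1 ≤ c ∧ c < y.col i ∧ (∀ r : Fin n, y.col r ≠ c) ∧
    (∀ d : ℕ, c < d → d < y.col i → ∃ r : Fin n, r < i ∧ y.col r = d) ∧
    x.col i = c ∧ ∀ r : Fin n, r ≠ i → x.col r = y.col r

/-- `x` is obtained from `y` by a single switch or push move on the rook in row `i`. -/
def MoveOnRow {n : ℕ} {lam : Partition n} (y x : Placement lam) (i : Fin n) : Prop :=
  (∃ k : Fin n, SwitchMove y x i k) ∨ PushMove y x i

/-- Two coatoms `c, c'` of the rook poset (with top element `t`) are entangled: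
there are two distinct elements each of which is covered by both `c` and `c'`
and lies below no other coatom. -/
def Entangled {n : ℕ} {lam : Partition n} (t c c' : Placement lam) : Prop :=
  ∃ z₁ z₂ : Placement lam, z₁ ≠ z₂ ∧
    (rcovers z₁ c ∧ rcovers z₁ c' ∧
      ∀ d : Placement lam, rcovers d t → d ≠ c → d ≠ c' → ¬ rle z₁ d) ∧
    (rcovers z₂ c ∧ rcovers z₂ c' ∧
      ∀ d : Placement lam, rcovers d t → d ≠ c → d ≠ c' → ¬ rle z₂ d)

/-- `X_I`: the set of elements of the rook poset lying below no coatom outside `I`. -/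
def Xset {n : ℕ} {lam : Partition n} (t : Placement lam) (I : Set (Placement lam)) :
    Set (Placement lam) :=
  {z : Placement lam | ∀ c' : Placement lam, rcovers c' t → c' ∉ I → ¬ rle z c'}

/-- The completed permutation `σ_x` of `{1, …, λ_n}` (as a function on 1-based positions):
position `i ≤ n` holds `x_i`, and the remaining positions hold the unused values in
increasing order (i.e. each subsequent position receives the smallest value not yet used). -/
def Placement.sigma {n : ℕ} {lam : Partition n} (x : Placement lam) : ℕ → ℕ := fun a =>
  if h : 1 ≤ a ∧ a ≤ n then x.col ⟨a - 1, by omega⟩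
  else ((Finset.Icc 1 lam.maxPart \ Finset.univ.image x.col).sort (· ≤ ·)).getD (a - n - 1) 0

/-- The rank `r(x)`: the number of inversions of the completed permutation `σ_x`. -/
def Placement.rank {n : ℕ} {lam : Partition n} (x : Placement lam) : ℕ :=
  ((Finset.Icc 1 lam.maxPart ×ˢ Finset.Icc 1 lam.maxPart).filter
    fun p => p.1 < p.2 ∧ x.sigma p.2 < x.sigma p.1).card

/-- Break a list after every entry equal to `1`. -/
def breakAfterOnes : List ℕ → List (List ℕ)
  | [] => []
  | a :: rest =>
    if a = 1 then [a] :: breakAfterOnes rest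
    else
      match breakAfterOnes rest with
      | [] => [[a]]
      | b :: bs => (a :: b) :: bs

/-- The multiset of blocks of a partition: break the GJW sequence after every entry
equal to `1` and delete all entries equal to `0` (discarding empty blocks). -/
def Partition.blocks {n : ℕ} (lam : Partition n) : Multiset (List ℕ) :=
  (((breakAfterOnes lam.gjw).map fun b => b.filter (· ≠ 0)).filter
    (· ≠ ([] : List ℕ)) : List (List ℕ))

/-- The conjugate of a block `b = (g_1, …, g_k)` ending in `1`: it is the GJW sequence of the
conjugate partition `ν'` of the partition `ν` with `ν_i = g_i + i`, where
`ν'_i = k + 2 - min {m | ν_m ≥ k + 2 - i}` with the convention `ν_{k+1} = k + 1`. -/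
noncomputable def conjBlock (b : List ℕ) : List ℕ :=
  let k := b.length
  let nu : ℕ → ℕ := fun m => if m ≤ k then b.getD (m - 1) 0 + m else k + 1
  (List.range k).map fun i0 =>
    let i := i0 + 1
    (k + 2 - sInf {m : ℕ | 1 ≤ m ∧ k + 2 - i ≤ nu m}) - i

/-- A block ends in `1`. -/
def endsInOne (b : List ℕ) : Prop := b.getLast? = some 1

/-- Two blocks are equivalent when they are equal, or one ends in `1` and the other is its
conjugate block. -/
def BlockEquiv (b b' : List ℕ) : Prop :=
  b = b' ∨ (endsInOne b ∧ b' = conjBlock b) ∨ (endsInOne b' ∧ b = conjBlock b')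

/-- Two partitions have matching block data: their multisets of blocks become equal after
replacing some blocks ending in `1` by their conjugate blocks. -/
def MatchingBlocks {n m : ℕ} (lam : Partition n) (mu : Partition m) : Prop :=
  Multiset.Rel BlockEquiv lam.blocks mu.blocks

/-- The rook posets of `lam` and `mu` are isomorphic as partially ordered sets. -/
def RookIso {n m : ℕ} (lam : Partition n) (mu : Partition m) : Prop :=
  ∃ e : Placement lam ≃ Placement mu, ∀ a b : Placement lam, rle a b ↔ rle (e a) (e b)

/-- A function `τ`, viewed as a permutation of `{1, …, N}`, is `312`-avoiding. -/
def Avoids312 (N : ℕ) (τ : ℕ → ℕ) : Prop :=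
  ∀ a b c : ℕ, 1 ≤ a → a < b → b < c → c ≤ N → ¬ (τ b < τ c ∧ τ c < τ a)

/-- A permutation of `Fin N` is `312`-avoiding. -/
def Avoids312P {N : ℕ} (τ : Equiv.Perm (Fin N)) : Prop :=
  ∀ a b c : Fin N, a < b → b < c → ¬ (τ b < τ c ∧ τ c < τ a)

/-- The Bruhat order on permutations, characterized by componentwise dominance of the
increasingly sorted initial segments. -/
def bruhatLE {N : ℕ} (σ τ : Equiv.Perm (Fin N)) : Prop :=
  ∀ j : ℕ, List.Forall₂ (· ≤ ·)
    (initSeg (fun a : Fin N => (σ a : ℕ)) j) (initSeg (fun a : Fin N => (τ a : ℕ)) j)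

/-!
Sorted lists of equal length dominate each other componentwise iff, for every threshold `m`,
the first has at most as many entries `≥ m` as the second. So `x ≤ y` says that for all `j`
and `m`, at most as many of the first `j` rooks of `x` as of `y` lie in columns `≥ m`; these
counts are largest for the greedy placement `t`. The coatom `c` of row `i` differs from `t`
in row `i` only (a switch with row `k` also changes row `k`, but once both rows are counted
the counts agree again). Its counts fall below those of `t` only for thresholds
`c_i < m ≤ t_i`, and then greediness puts every rook of a row between `i` and `j` right of
column `t_i`: past row `i` the count of `c` grows by one per row, which no other placement
can beat. So the inequality at `j = i + 1` propagates to all `j`.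
-/

open Finset

def cntGe {n : ℕ} (x : Fin n → ℕ) (j m : ℕ) : ℕ :=
  #{r : Fin n | (r : ℕ) < j ∧ m ≤ x r}

theorem _root_.List.forall₂_le_iff_countP_le {α : Type*} [LinearOrder α] :
    ∀ l₁ l₂ : List α, l₁.Pairwise (· ≤ ·) → l₂.Pairwise (· ≤ ·) → l₁.length = l₂.length →
      (List.Forall₂ (· ≤ ·) l₁ l₂ ↔ ∀ m, l₁.countP (m ≤ ·) ≤ l₂.countP (m ≤ ·))
  | [], [], _, _, _ => by simp
  | [], _ :: _, _, _, h | _ :: _, [], _, _, h => by simp at h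
  | a :: l₁, b :: l₂, h₁, h₂, hlen => by
    rw [List.pairwise_cons] at h₁ h₂
    replace hlen : l₁.length = l₂.length := by simpa using hlen
    have ih := forall₂_le_iff_countP_le l₁ l₂ h₁.2 h₂.2 hlen
    have count_all {l : List α} {m : α} (h : ∀ y ∈ l, m ≤ y) : l.countP (m ≤ ·) = l.length :=
      List.countP_eq_length.mpr fun y hy => decide_eq_true (h y hy)
    rw [List.forall₂_cons, ih]
    constructor
    · rintro ⟨hab, h⟩ m
      simp only [List.countP_cons, decide_eq_true_eq]
      have := h m
      split_ifs with ha hb <;> first | omega | exact absurd (ha.trans hab) hb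
    · intro h
      have hab : a ≤ b := by
        by_contra hba
        have ha := h a
        simp only [List.countP_cons, le_refl, decide_true, if_true, decide_eq_true_eq,
          if_neg hba, count_all h₁.1] at ha
        have := List.countP_le_length (p := (a ≤ ·)) (l := l₂)
        omega
      refine ⟨hab, fun m => ?_⟩
      by_cases hm : m ≤ b
      · rw [count_all fun y hy => hm.trans (h₂.1 y hy), ← hlen]
        exact List.countP_le_length
      · have := h m
        simp only [List.countP_cons, decide_eq_true_eq, if_neg hm,
          if_neg fun ha : m ≤ a => hm (ha.trans hab)] at this
        exact this

section Counting

variable {n : ℕ}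

theorem countP_initSeg {x : Fin n → ℕ} (hx : Function.Injective x) (j m : ℕ) :
    (initSeg x j).countP (m ≤ ·) = cntGe x j m := by
  rw [initSeg, ← Multiset.coe_countP, sort_eq, Multiset.countP_eq_card_filter,
    ← filter_val, ← card_def, filter_image,
    card_image_of_injective _ hx, filter_filter, cntGe]

theorem forall₂_initSeg_iff_cntGe_le {x y : Fin n → ℕ} (hx : Function.Injective x)
    (hy : Function.Injective y) (j : ℕ) :
    List.Forall₂ (· ≤ ·) (initSeg x j) (initSeg y j) ↔ ∀ m, cntGe x j m ≤ cntGe y j m := by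
  have hlen : (initSeg x j).length = (initSeg y j).length := by
    simp only [initSeg, length_sort, card_image_of_injective _ hx,
      card_image_of_injective _ hy]
  rw [List.forall₂_le_iff_countP_le (initSeg x j) (initSeg y j) (pairwise_sort _ _)
    (pairwise_sort _ _) hlen]
  simp only [countP_initSeg hx, countP_initSeg hy]

theorem cntGe_mono (x : Fin n → ℕ) (m : ℕ) {j j' : ℕ} (h : j ≤ j') :
    cntGe x j m ≤ cntGe x j' m :=
  card_le_card fun r hr => by simp only [mem_filter, mem_univ, true_and] at hr ⊢; omega

theorem cntGe_congr {x y : Fin n → ℕ} {j m : ℕ}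
    (h : ∀ r : Fin n, (r : ℕ) < j → (m ≤ x r ↔ m ≤ y r)) : cntGe x j m = cntGe y j m := by
  unfold cntGe
  congr 1
  exact filter_congr fun r _ => and_congr_right (h r)

theorem cntGe_comp_perm (x : Fin n → ℕ) (σ : Equiv.Perm (Fin n)) {j : ℕ}
    (hσ : ∀ r, (σ r : ℕ) < j ↔ (r : ℕ) < j) (m : ℕ) : cntGe (x ∘ σ) j m = cntGe x j m :=
  card_equiv σ fun r => by simp [hσ]

theorem cntGe_succ (x : Fin n → ℕ) (r : Fin n) (m : ℕ) :
    cntGe x (r + 1) m = cntGe x r m + if m ≤ x r then 1 else 0 := by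
  have : univ.filter (fun r' : Fin n => (r' : ℕ) < r + 1 ∧ m ≤ x r') =
      univ.filter (fun r' : Fin n => (r' : ℕ) < r ∧ m ≤ x r') ∪
        univ.filter (fun r' => r' = r ∧ m ≤ x r') := by
    ext r'
    simp only [mem_filter, mem_union, mem_univ, true_and, ← Fin.val_inj]
    omega
  rw [cntGe, cntGe, this, card_union_of_disjoint]
  · rw [filter_and (· = r), filter_eq', if_pos (mem_univ r)]
    split_ifs <;> simp [*]
  · exact disjoint_filter.mpr fun r' _ h h' => by rw [h'.1] at h; omega

theorem cntGe_succ_of_le (x : Fin n → ℕ) {j : ℕ} (hj : n ≤ j) (m : ℕ) :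
    cntGe x (j + 1) m = cntGe x j m := by
  unfold cntGe
  congr 1
  exact filter_congr fun r _ => by have := r.isLt; omega

theorem cntGe_le_of_forall_le {x y : Fin n → ℕ} {j₀ j m : ℕ} (hj : j₀ ≤ j)
    (h₀ : cntGe x j₀ m ≤ cntGe y j₀ m) (hy : ∀ r : Fin n, j₀ ≤ r → (r : ℕ) < j → m ≤ y r) :
    cntGe x j m ≤ cntGe y j m := by
  have split (z : Fin n → ℕ) :
      cntGe z j m = cntGe z j₀ m + #{r : Fin n | j₀ ≤ (r : ℕ) ∧ (r : ℕ) < j ∧ m ≤ z r} := by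
    rw [cntGe, cntGe, ← card_union_of_disjoint (disjoint_filter.mpr fun r _ h h' => by omega),
      ← filter_or]
    exact congrArg card (filter_congr fun r _ => by omega)
  have tail : #{r : Fin n | j₀ ≤ (r : ℕ) ∧ (r : ℕ) < j ∧ m ≤ x r} ≤
      #{r : Fin n | j₀ ≤ (r : ℕ) ∧ (r : ℕ) < j ∧ m ≤ y r} :=
    card_le_card fun r hr => by
      simp only [mem_filter, mem_univ, true_and] at hr ⊢
      exact ⟨hr.1, hr.2.1, hy r hr.1 hr.2.1⟩
  rw [split x, split y]
  omega

theorem cntGe_eq_or_forall_le_of_update {c t : Fin n → ℕ} {i : Fin n} {j : ℕ}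
    (hi : c i ≤ t i) (hagree : ∀ r : Fin n, r ≠ i → (r : ℕ) < j → c r = t r)
    (hright : ∀ r : Fin n, (i : ℕ) < r → (r : ℕ) < j → t i < t r) (m : ℕ) :
    cntGe c j m = cntGe t j m ∨
      ((i : ℕ) < j ∧ ∀ r : Fin n, (i : ℕ) < r → (r : ℕ) < j → m ≤ c r) := by
  by_cases hm : (i : ℕ) < j ∧ c i < m ∧ m ≤ t i
  · refine .inr ⟨hm.1, fun r hir hrj => ?_⟩
    rw [hagree r (fun h => by simp [h] at hir) hrj]
    exact hm.2.2.trans (hright r hir hrj).le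
  · refine .inl (cntGe_congr fun r hrj => ?_)
    rcases eq_or_ne r i with rfl | hri
    · omega
    · rw [hagree r hri hrj]

end Counting

section Greedy

variable {n : ℕ} {lam : Partition n} {t : Placement lam}

theorem Placement.cntGe_succ_le_card_Icc (x : Placement lam) (r : Fin n) (m : ℕ) :
    cntGe x.col (r + 1) m ≤ #(Icc m (lam.part r)) :=
  card_le_card_of_injOn x.col
    (fun q hq => by
      simp only [coe_filter, Set.mem_ofPred_eq, mem_univ, true_and] at hq
      exact mem_Icc.mpr ⟨hq.2, (x.le_part q).trans (lam.mono (Fin.mk_le_mk.mpr (by omega)))⟩)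
    x.inj.injOn

/-- Row `r` skipped every column in `[m, λ_r]`, so lower rows occupy all of them. -/
theorem IsGreedy.card_Icc_le_cntGe (ht : IsGreedy t) {r : Fin n} {m : ℕ} (hr : t.col r < m) :
    #(Icc m (lam.part r)) ≤ cntGe t.col r m :=
  card_le_card_of_surjOn t.col fun v hv => by
    rw [coe_Icc, Set.mem_Icc] at hv
    by_contra hfree
    refine absurd (ht r v (by have := t.pos r; omega) hv.2 fun q hq hqv => hfree ?_) (by omega)
    exact ⟨q, by simpa [hqv] using And.intro hq hv.1, hqv⟩

theorem IsGreedy.cntGe_le (ht : IsGreedy t) (x : Placement lam) (j m : ℕ) :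
    cntGe x.col j m ≤ cntGe t.col j m := by
  induction j with
  | zero => simp [cntGe]
  | succ j ih =>
    by_cases hj : j < n
    · obtain ⟨r, rfl⟩ : ∃ r : Fin n, (r : ℕ) = j := ⟨⟨j, hj⟩, rfl⟩
      by_cases hr : m ≤ t.col r
      · rw [cntGe_succ x.col, cntGe_succ t.col, if_pos hr]
        split_ifs <;> omega
      · calc cntGe x.col (r + 1) m ≤ #(Icc m (lam.part r)) := x.cntGe_succ_le_card_Icc r m
          _ ≤ cntGe t.col r m := ht.card_Icc_le_cntGe (by omega)
          _ ≤ cntGe t.col (r + 1) m := cntGe_mono _ _ (by omega)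
    · rw [cntGe_succ_of_le _ (by omega), cntGe_succ_of_le _ (by omega)]
      exact ih

theorem IsGreedy.le_col_of_le (ht : IsGreedy t) {q r : Fin n} (hqr : q ≤ r) {v : ℕ}
    (hv : 1 ≤ v) (hvq : v ≤ t.col q) (hfree : ∀ p < r, t.col p ≠ v) : v ≤ t.col r :=
  ht r v hv (hvq.trans ((t.le_part q).trans (lam.mono hqr))) hfree

variable {c : Placement lam} {i : Fin n}

theorem SwitchMove.col_lt_col (ht : IsGreedy t) {k : Fin n} (h : SwitchMove t c i k) {r : Fin n}
    (hir : i < r) (hrk : r < k) : t.col i < t.col r := by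
  obtain ⟨-, hki, hrect, -⟩ := h
  have hkr : t.col k ≤ t.col r := ht.le_col_of_le hir.le (t.pos k) hki.le fun p hp hpk => by
    cases t.inj hpk
    exact lt_asymm hp hrk
  by_contra! hri
  rcases hrect r hir.le hrk.le hkr hri with rfl | rfl
  · exact lt_irrefl _ hir
  · exact lt_irrefl _ hrk

theorem PushMove.col_lt_col (ht : IsGreedy t) (h : PushMove t c i) {r : Fin n} (hir : i < r) :
    t.col i < t.col r := by
  obtain ⟨d, hd, hdi, hfree, hbetween, -⟩ := h
  have hdr : d < t.col r :=
    (ht.le_col_of_le hir.le hd hdi.le fun p _ => hfree p).lt_of_ne (hfree r).symm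
  by_contra! hri
  rcases hri.lt_or_eq with hlt | heq
  · obtain ⟨p, hpi, hp⟩ := hbetween _ hdr hlt
    cases t.inj hp
    exact lt_asymm hpi hir
  · exact hir.ne (t.inj heq).symm

theorem MoveOnRow.cntGe_eq_or_forall_le (ht : IsGreedy t) (hc : MoveOnRow t c i) (j m : ℕ) :
    cntGe c.col j m = cntGe t.col j m ∨
      ((i : ℕ) < j ∧ ∀ r : Fin n, (i : ℕ) < r → (r : ℕ) < j → m ≤ c.col r) := by
  rcases hc with ⟨k, hs⟩ | hp
  · obtain ⟨hik, hki, -, hci, hck, hcr⟩ := id hs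
    by_cases hkj : (k : ℕ) < j
    · have hswap : c.col = t.col ∘ Equiv.swap i k := funext fun r => by
        rcases eq_or_ne r i with rfl | hri
        · simp [hci]
        rcases eq_or_ne r k with rfl | hrk
        · simp [hck]
        · simp [Equiv.swap_apply_of_ne_of_ne hri hrk, hcr r hri hrk]
      refine .inl (hswap ▸ cntGe_comp_perm _ _ (fun r => ?_) m)
      rw [Equiv.swap_apply_def]
      split_ifs <;> grind
    · exact cntGe_eq_or_forall_le_of_update (hci ▸ hki.le)
        (fun r hri hrj => hcr r hri fun hrk => hkj (hrk ▸ hrj))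
        (fun r hir hrj => hs.col_lt_col ht hir (by omega)) m
  · obtain ⟨d, -, hdi, -, -, hci, hcr⟩ := id hp
    exact cntGe_eq_or_forall_le_of_update (hci ▸ hdi.le) (fun r hri _ => hcr r hri)
      (fun r hir _ => hp.col_lt_col ht hir) m

end Greedy

/-- To check whether `x` lies below the coatom `c` of row `i`, it suffices
to check the dominance condition on the sorted initial segments of length `i` only. -/
theorem le_coatom_iff_initSeg {n : ℕ} (lam : Partition n) (t c : Placement lam)
    (ht : IsGreedy t) (i : Fin n) (hc : MoveOnRow t c i) (x : Placement lam) :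
    rle x c ↔
      List.Forall₂ (· ≤ ·) (initSeg x.col ((i : ℕ) + 1)) (initSeg c.col ((i : ℕ) + 1)) := by
  refine ⟨fun h => h _, fun H j => ?_⟩
  rw [forall₂_initSeg_iff_cntGe_le x.inj c.inj] at H ⊢
  intro m
  rcases hc.cntGe_eq_or_forall_le ht j m with heq | ⟨hij, hright⟩
  · exact heq ▸ ht.cntGe_le x j m
  · exact cntGe_le_of_forall_le hij (H m) hright

end RookPoset
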